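/- Let φ : [t₀, t_f] → {0,1} with φ(t₀) = φ(t_f) = 0. The total variation of φ equals 2 if and only if φ⁻¹({1}) is nonempty and order-convex (t₁ < t < t₂ with φ(t₁) = φ(t₂) = 1 implies φ(t) = 1). -/

import Mathlib

lemma eVariationOn_neg (f : ℝ → ℝ) (s : Set ℝ) :
    eVariationOn (fun x => -f x) s = eVariationOn f s := by
  simp only [eVariationOn, edist_neg_neg]

/-- For a `{0,1}`-valued function vanishing at both endpoints, the total variation
equals `2` iff the set `φ⁻¹({1})` (within `[t₀,t_f]`) is nonempty and order-convex,
i.e. the trajectory makes exactly one visit. -/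
theorem total_variation_eq_two_iff_single_visit {t₀ tf : ℝ} (hts : t₀ < tf)
    {φ : ℝ → ℝ}
    (hval : ∀ t ∈ Set.Icc t₀ tf, φ t = 0 ∨ φ t = 1)
    (hBV : eVariationOn φ (Set.Icc t₀ tf) ≠ ⊤)
    (h0 : φ t₀ = 0) (hf : φ tf = 0) :
    eVariationOn φ (Set.Icc t₀ tf) = 2 ↔
      ((∃ t ∈ Set.Icc t₀ tf, φ t = 1) ∧
        ∀ t₁ t t₂, t₁ ∈ Set.Icc t₀ tf → t ∈ Set.Icc t₀ tf → t₂ ∈ Set.Icc t₀ tf →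
          t₁ < t → t < t₂ → φ t₁ = 1 → φ t₂ = 1 → φ t = 1) := by
  constructor
  · intro hV
    constructor
    · by_contra h
      push_neg at h
      have hzero : eVariationOn φ (Set.Icc t₀ tf) = 0 := by
        rw [eVariationOn.eq_zero_iff]
        intro x hx y hy
        have hx0 : φ x = 0 := (hval x hx).resolve_right (h x hx)
        have hy0 : φ y = 0 := (hval y hy).resolve_right (h y hy)
        rw [hx0, hy0, edist_self]
      rw [hzero] at hV
      exact absurd hV (by norm_num)
    · intro t₁ t t₂ ht₁ ht ht₂ h₁t h₂t hv₁ hv₂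
      by_contra hc
      have hv : φ t = 0 := (hval t ht).resolve_right hc
      -- build the sequence t₀, t₁, t, t₂ giving variation ≥ 3
      set u : ℕ → ℝ := fun n => if n = 0 then t₀ else if n = 1 then t₁ else if n = 2 then t else t₂
      have hu : Monotone u := by
        have h01 : t₀ ≤ t₁ := ht₁.1
        apply monotone_nat_of_le_succ
        intro n
        match n with
        | 0 => simpa [u] using h01
        | 1 => simpa [u] using h₁t.le
        | 2 => simpa [u] using h₂t.le
        | (n+3) => simp [u]
      have hus : ∀ i, u i ∈ Set.Icc t₀ tf := by
        intro i
        match i with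
        | 0 => simpa [u] using Set.left_mem_Icc.2 hts.le
        | 1 => simpa [u] using ht₁
        | 2 => simpa [u] using ht
        | (n+3) => simpa [u] using ht₂
      have hle := eVariationOn.sum_le (f := φ) (n := 3) hu hus
      have hsum : (∑ i ∈ Finset.range 3, edist (φ (u (i + 1))) (φ (u i))) = 3 := by
        rw [Finset.sum_range_succ, Finset.sum_range_succ, Finset.sum_range_one]
        simp only [u]
        norm_num [hv₁, hv₂, hv, h0, edist_dist, Real.dist_eq, ENNReal.ofReal_one]
      rw [hsum, hV] at hle
      exact absurd hle (by norm_num)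
  · rintro ⟨⟨t, ht, hφt⟩, hconv⟩
    have ht0 : t₀ < t := by
      rcases lt_or_eq_of_le ht.1 with h | h
      · exact h
      · rw [← h] at hφt; rw [h0] at hφt; norm_num at hφt
    have httf : t < tf := by
      rcases lt_or_eq_of_le ht.2 with h | h
      · exact h
      · rw [h] at hφt; rw [hf] at hφt; norm_num at hφt
    -- φ is monotone on [t₀, t] and antitone on [t, tf]
    have hmono : MonotoneOn φ (Set.Icc t₀ t) := by
      intro x hx y hy hxy
      have hxI : x ∈ Set.Icc t₀ tf := ⟨hx.1, hx.2.trans httf.le⟩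
      have hyI : y ∈ Set.Icc t₀ tf := ⟨hy.1, hy.2.trans httf.le⟩
      rcases hval x hxI with h1 | h1
      · rw [h1]
        rcases hval y hyI with h2 | h2 <;> rw [h2] <;> norm_num
      · have : φ y = 1 := by
          rcases eq_or_lt_of_le hxy with h | h
          · rw [← h]; exact h1
          · rcases eq_or_lt_of_le hy.2 with h' | h'
            · rw [h']; exact hφt
            · exact hconv x y t hxI hyI ht h h' h1 hφt
        rw [h1, this]
    have hanti : AntitoneOn φ (Set.Icc t tf) := by
      intro x hx y hy hxy
      have hxI : x ∈ Set.Icc t₀ tf := ⟨ht0.le.trans hx.1, hx.2⟩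
      have hyI : y ∈ Set.Icc t₀ tf := ⟨ht0.le.trans hy.1, hy.2⟩
      rcases hval y hyI with h1 | h1
      · rw [h1]
        rcases hval x hxI with h2 | h2 <;> rw [h2] <;> norm_num
      · have : φ x = 1 := by
          rcases eq_or_lt_of_le hxy with h | h
          · rw [h]; exact h1
          · rcases eq_or_lt_of_le hx.1 with h' | h'
            · rw [← h']; exact hφt
            · exact hconv t x y ht hxI hyI h' h hφt h1
        rw [h1, this]
    -- split the variation at t
    have hsplit := eVariationOn.Icc_add_Icc φ (s := Set.Icc t₀ tf) ht0.le httf.le ht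
    have e1 : Set.Icc t₀ tf ∩ Set.Icc t₀ t = Set.Icc t₀ t := by
      apply Set.inter_eq_self_of_subset_right
      exact Set.Icc_subset_Icc le_rfl httf.le
    have e2 : Set.Icc t₀ tf ∩ Set.Icc t tf = Set.Icc t tf := by
      apply Set.inter_eq_self_of_subset_right
      exact Set.Icc_subset_Icc ht0.le le_rfl
    have e3 : Set.Icc t₀ tf ∩ Set.Icc t₀ tf = Set.Icc t₀ tf := Set.inter_self _
    rw [e1, e2, e3] at hsplit
    -- upper bounds on each piece
    have hub1 : eVariationOn φ (Set.Icc t₀ t) ≤ 1 := by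
      have := hmono.eVariationOn_le (a := t₀) (b := t)
        (Set.left_mem_Icc.2 ht0.le) (Set.right_mem_Icc.2 ht0.le)
      rw [Set.inter_self] at this
      refine this.trans ?_
      rw [hφt, h0]
      norm_num
    have hub2 : eVariationOn φ (Set.Icc t tf) ≤ 1 := by
      have hm : MonotoneOn (fun x => -φ x) (Set.Icc t tf) := fun x hx y hy hxy =>
        neg_le_neg (hanti hx hy hxy)
      have := hm.eVariationOn_le (a := t) (b := tf)
        (Set.left_mem_Icc.2 httf.le) (Set.right_mem_Icc.2 httf.le)
      rw [Set.inter_self, eVariationOn_neg] at this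
      refine this.trans ?_
      simp only [hφt, hf]
      norm_num
    -- lower bounds on each piece
    have hlb1 : (1 : ENNReal) ≤ eVariationOn φ (Set.Icc t₀ t) := by
      have := eVariationOn.edist_le φ (Set.left_mem_Icc.2 ht0.le)
        (Set.right_mem_Icc.2 ht0.le)
      rw [h0, hφt] at this
      refine le_trans ?_ this
      rw [edist_dist, Real.dist_eq]
      norm_num
    have hlb2 : (1 : ENNReal) ≤ eVariationOn φ (Set.Icc t tf) := by
      have := eVariationOn.edist_le φ (Set.left_mem_Icc.2 httf.le)
        (Set.right_mem_Icc.2 httf.le)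
      rw [hf, hφt] at this
      refine le_trans ?_ this
      rw [edist_dist, Real.dist_eq]
      norm_num
    have h1 : eVariationOn φ (Set.Icc t₀ t) = 1 := le_antisymm hub1 hlb1
    have h2 : eVariationOn φ (Set.Icc t tf) = 1 := le_antisymm hub2 hlb2
    rw [← hsplit, h1, h2]
    norm_num
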